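/- In the 2-player WLC game G(Z_3) with C_1 = {a_1,b_1,c_1}, C_2 = {a_2,b_2,c_2}, W = {(a_1,a_2),(b_1,a_2),(b_1,b_2),(c_1,b_2),(c_1,c_2)}, choice b_1 weakly dominates a_1 and b_2 weakly dominates c_2; moreover, in the restricted game on ({b_1,c_1}, {a_2,b_2}), b_1 weakly dominates c_1 and b_2 weakly dominates a_2, and (b_1, b_2) ∈ W; hence G(Z_3) is solvable by two iterations of simultaneous elimination of weakly dominated choices (CRC) but not by one (IRC). -/

import Mathlib

open Classical

/-- An `n`-player win-lose coordination (WLC) game: a finite domain of choices,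
nonempty pairwise disjoint choice sets `C i` for the players, and a winning
relation `W` consisting of choice profiles. -/
structure WLC (n : ℕ) where
  A : Type
  finA : Finite A
  C : Fin n → Set A
  C_nonempty : ∀ i, (C i).Nonempty
  C_disjoint : ∀ i j, i ≠ j → Disjoint (C i) (C j)
  W : Set (Fin n → A)
  W_sub : ∀ σ ∈ W, ∀ i, σ i ∈ C i

namespace WLC

variable {n : ℕ}

/-- `σ` is a choice profile w.r.t. the choice sets `Cs`. -/
def IsProfileOn {A : Type} (Cs : Fin n → Set A) (σ : Fin n → A) : Prop :=
  ∀ i, σ i ∈ Cs i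

/-- `c` is a surely winning choice of player `i` w.r.t. choice sets `Cs`
and winning relation `W`. -/
def SWinOn {A : Type} (Cs : Fin n → Set A) (W : Set (Fin n → A)) (i : Fin n) (c : A) : Prop :=
  c ∈ Cs i ∧ ∀ σ, IsProfileOn Cs σ → σ i = c → σ ∈ W

/-- `c` is a surely losing choice of player `i` w.r.t. choice sets `Cs`
and winning relation `W`. -/
def SLoseOn {A : Type} (Cs : Fin n → Set A) (W : Set (Fin n → A)) (i : Fin n) (c : A) : Prop :=
  c ∈ Cs i ∧ ∀ σ, IsProfileOn Cs σ → σ i = c → σ ∉ W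

def IsProfile (G : WLC n) (σ : Fin n → G.A) : Prop := IsProfileOn G.C σ

def SurelyWinning (G : WLC n) (i : Fin n) (c : G.A) : Prop := SWinOn G.C G.W i c

def SurelyLosing (G : WLC n) (i : Fin n) (c : G.A) : Prop := SLoseOn G.C G.W i c

/-- The winning extension of the choice `c` of player `i`: the (sets of) tuples of
choices of the other players that complete `c` to a winning profile.  (Technically we
use full profiles whose `i`-th coordinate is irrelevant, replacing it by `c`.) -/
def winExtOn {A : Type} (Cs : Fin n → Set A) (W : Set (Fin n → A)) (i : Fin n) (c : A) :
    Set (Fin n → A) :=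
  {σ | (∀ j, j ≠ i → σ j ∈ Cs j) ∧ Function.update σ i c ∈ W}

def winExt (G : WLC n) (i : Fin n) (c : G.A) : Set (Fin n → G.A) := winExtOn G.C G.W i c

end WLC

namespace WLC

variable {n : ℕ}

/-- `c` is better than (weakly dominates) `c'` for player `i`, w.r.t. choice sets `Cs`
and winning relation `W`: the winning extension of `c'` is a proper subset of that
of `c`. -/
def BetterOn {A : Type} (Cs : Fin n → Set A) (W : Set (Fin n → A)) (i : Fin n)
    (c c' : A) : Prop :=
  winExtOn Cs W i c' ⊂ winExtOn Cs W i c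

/-- The first stage of simultaneous elimination of weakly dominated choices. -/
def ndset1 (G : WLC n) (i : Fin n) : Set G.A :=
  {c ∈ G.C i | ¬ ∃ c' ∈ G.C i, BetterOn G.C G.W i c' c}

/-- The second stage of simultaneous elimination of weakly dominated choices. -/
def ndset2 (G : WLC n) (i : Fin n) : Set G.A :=
  {c ∈ ndset1 G i | ¬ ∃ c' ∈ ndset1 G i, BetterOn (ndset1 G) G.W i c' c}

end WLC

open WLC

/-- The game `G(Z₃)`: choices `a₁ = (0,0)`, `b₁ = (0,1)`, `c₁ = (0,2)`,
`a₂ = (1,0)`, `b₂ = (1,1)`, `c₂ = (1,2)`;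
`W = {(a₁,a₂), (b₁,a₂), (b₁,b₂), (c₁,b₂), (c₁,c₂)}`. -/
def GZ3 : WLC 2 where
  A := Fin 2 × Fin 3
  finA := inferInstance
  C := fun i => {a | a.1 = i}
  C_nonempty := fun i => ⟨(i, 0), rfl⟩
  C_disjoint := fun i j h => Set.disjoint_left.mpr fun a ha hb => h (ha.symm.trans hb)
  W := {σ | (σ 0 = (0,0) ∧ σ 1 = (1,0)) ∨ (σ 0 = (0,1) ∧ σ 1 = (1,0)) ∨
            (σ 0 = (0,1) ∧ σ 1 = (1,1)) ∨ (σ 0 = (0,2) ∧ σ 1 = (1,1)) ∨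
            (σ 0 = (0,2) ∧ σ 1 = (1,2))}
  W_sub := by
    rintro σ (⟨h0, h1⟩ | ⟨h0, h1⟩ | ⟨h0, h1⟩ | ⟨h0, h1⟩ | ⟨h0, h1⟩) i <;> fin_cases i <;>
      simp [Set.mem_setOf_eq, h0, h1]

/-
In a two-player game the winning extension of a choice is the preimage of its set of winning
replies, so weak dominance is strict inclusion of reply sets. In `G(Z₃)` the reply sets are
`a₁ ↦ {a₂}, b₁ ↦ {a₂, b₂}, c₁ ↦ {b₂, c₂}` and `a₂ ↦ {a₁, b₁}, b₂ ↦ {b₁, c₁}, c₂ ↦ {c₁}`, whose only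
strict inclusions eliminate `a₁` and `c₂`. Among the survivors the replies of `c₁` and `a₂` shrink
to `{b₂}` and `{b₁}`, so the second round leaves only the winning profile `(b₁, b₂)`, while the
first-round survivors still contain the losing profile `(c₁, a₂)`.
-/

namespace WLC

section TwoPlayer

variable {A : Type} {Cs : Fin 2 → Set A} {W : Set (Fin 2 → A)}

theorem winExtOn_zero (c : A) :
    winExtOn Cs W 0 c = (fun σ => σ 1) ⁻¹' {d ∈ Cs 1 | ![c, d] ∈ W} := by
  ext σ
  have hupdate : Function.update σ 0 c = ![c, σ 1] := by
    ext j; fin_cases j <;> rfl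
  simp [winExtOn, hupdate]

theorem winExtOn_one (c : A) :
    winExtOn Cs W 1 c = (fun σ => σ 0) ⁻¹' {d ∈ Cs 0 | ![d, c] ∈ W} := by
  ext σ
  have hupdate : Function.update σ 1 c = ![σ 0, c] := by
    ext j; fin_cases j <;> rfl
  simp [winExtOn, hupdate]

theorem betterOn_zero_iff {c c' : A} :
    BetterOn Cs W 0 c c' ↔ {d ∈ Cs 1 | ![c', d] ∈ W} ⊂ {d ∈ Cs 1 | ![c, d] ∈ W} := by
  have hsurj : Function.Surjective fun σ : Fin 2 → A => σ 1 := fun d => ⟨![c, d], rfl⟩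
  rw [BetterOn, winExtOn_zero, winExtOn_zero, ← Set.range_inter_ssubset_iff_preimage_ssubset,
    hsurj.range_eq, Set.univ_inter, Set.univ_inter]

theorem betterOn_one_iff {c c' : A} :
    BetterOn Cs W 1 c c' ↔ {d ∈ Cs 0 | ![d, c'] ∈ W} ⊂ {d ∈ Cs 0 | ![d, c] ∈ W} := by
  have hsurj : Function.Surjective fun σ : Fin 2 → A => σ 0 := fun d => ⟨![d, c], rfl⟩
  rw [BetterOn, winExtOn_one, winExtOn_one, ← Set.range_inter_ssubset_iff_preimage_ssubset,
    hsurj.range_eq, Set.univ_inter, Set.univ_inter]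

end TwoPlayer

variable {n : ℕ}

theorem ndset2_subset_singleton {G : WLC n} {i : Fin n} {b : G.A} (hb : b ∈ ndset1 G i)
    (hdom : ∀ c ∈ ndset1 G i, c ≠ b → BetterOn (ndset1 G) G.W i b c) :
    ndset2 G i ⊆ {b} := by
  rintro c ⟨hc, hund⟩
  by_contra hcb
  exact hund ⟨b, hb, hdom c hc hcb⟩

theorem mem_W_of_ndset2_subset_singleton {G : WLC n} {β : Fin n → G.A} (hβ : β ∈ G.W)
    (hsub : ∀ i, ndset2 G i ⊆ {β i}) {σ : Fin n → G.A} (hσ : ∀ i, σ i ∈ ndset2 G i) :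
    σ ∈ G.W := by
  have hσβ : σ = β := funext fun i => hsub i (hσ i)
  exact hσβ ▸ hβ

end WLC

namespace GZ3

/- `GZ3.A` unfolds to `Fin 2 × Fin 3` only at default transparency, which defeats `simp` and `rw`
on literal pairs standing for elements of `GZ3.A`; hence these names. -/
def a₁ : GZ3.A := (0, 0)
def b₁ : GZ3.A := (0, 1)
def c₁ : GZ3.A := (0, 2)
def a₂ : GZ3.A := (1, 0)
def b₂ : GZ3.A := (1, 1)
def c₂ : GZ3.A := (1, 2)

instance : DecidableEq GZ3.A := inferInstanceAs (DecidableEq (Fin 2 × Fin 3))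

instance : Fintype GZ3.A := inferInstanceAs (Fintype (Fin 2 × Fin 3))

theorem mem_C {i : Fin 2} {x : GZ3.A} : x ∈ GZ3.C i ↔ Prod.fst (α := Fin 2) (β := Fin 3) x = i :=
  Iff.rfl

theorem C_zero : GZ3.C 0 = {a₁, b₁, c₁} := by
  ext x
  simp only [mem_C, Set.mem_insert_iff, Set.mem_singleton_iff]
  revert x
  decide

theorem C_one : GZ3.C 1 = {a₂, b₂, c₂} := by
  ext x
  simp only [mem_C, Set.mem_insert_iff, Set.mem_singleton_iff]
  revert x
  decide

theorem pair_mem_W {x y : GZ3.A} : ![x, y] ∈ GZ3.W ↔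
    (x = a₁ ∧ y = a₂) ∨ (x = b₁ ∧ y = a₂) ∨ (x = b₁ ∧ y = b₂) ∨
      (x = c₁ ∧ y = b₂) ∨ (x = c₁ ∧ y = c₂) := Iff.rfl

theorem betterOn_b₁_a₁ : BetterOn GZ3.C GZ3.W 0 b₁ a₁ := by
  simp +decide [betterOn_zero_iff, Set.ssubset_def, Set.subset_def, C_one, pair_mem_W]

theorem betterOn_b₂_c₂ : BetterOn GZ3.C GZ3.W 1 b₂ c₂ := by
  simp +decide [betterOn_one_iff, Set.ssubset_def, Set.subset_def, C_zero, pair_mem_W]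

theorem ndset1_zero : ndset1 GZ3 0 = {b₁, c₁} := by
  ext x
  simp only [ndset1, C_zero, Set.mem_setOf_eq, Set.mem_insert_iff, Set.mem_singleton_iff]
  constructor
  · rintro ⟨rfl | rfl | rfl, hund⟩
    · exact absurd ⟨b₁, by simp, betterOn_b₁_a₁⟩ hund
    · simp
    · simp
  · rintro (rfl | rfl) <;>
      simp +decide [betterOn_zero_iff, Set.ssubset_def, Set.subset_def, C_one, pair_mem_W]

theorem ndset1_one : ndset1 GZ3 1 = {a₂, b₂} := by
  ext x
  simp only [ndset1, C_one, Set.mem_setOf_eq, Set.mem_insert_iff, Set.mem_singleton_iff]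
  constructor
  · rintro ⟨rfl | rfl | rfl, hund⟩
    · simp
    · simp
    · exact absurd ⟨b₂, by simp, betterOn_b₂_c₂⟩ hund
  · rintro (rfl | rfl) <;>
      simp +decide [betterOn_one_iff, Set.ssubset_def, Set.subset_def, C_zero, pair_mem_W]

theorem betterOn_ndset1_b₁_c₁ : BetterOn (ndset1 GZ3) GZ3.W 0 b₁ c₁ := by
  simp +decide [betterOn_zero_iff, ndset1_one, Set.ssubset_def, Set.subset_def, pair_mem_W]

theorem betterOn_ndset1_b₂_a₂ : BetterOn (ndset1 GZ3) GZ3.W 1 b₂ a₂ := by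
  simp +decide [betterOn_one_iff, ndset1_zero, Set.ssubset_def, Set.subset_def, pair_mem_W]

theorem ndset2_zero_subset : ndset2 GZ3 0 ⊆ {b₁} := by
  refine ndset2_subset_singleton (by simp [ndset1_zero]) ?_
  rw [ndset1_zero]
  rintro c (rfl | rfl) hne
  · exact absurd rfl hne
  · exact betterOn_ndset1_b₁_c₁

theorem ndset2_one_subset : ndset2 GZ3 1 ⊆ {b₂} := by
  refine ndset2_subset_singleton (by simp [ndset1_one]) ?_
  rw [ndset1_one]
  rintro c (rfl | rfl) hne
  · exact betterOn_ndset1_b₂_a₂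
  · exact absurd rfl hne

end GZ3

/-- In `G(Z₃)`, `b₁` weakly dominates `a₁` and `b₂` weakly dominates `c₂`;
the sets remaining after one round of simultaneous elimination of weakly dominated
choices are `{b₁,c₁}` and `{a₂,b₂}`; in the restricted game `b₁` weakly dominates `c₁`
and `b₂` weakly dominates `a₂`, and `(b₁,b₂) ∈ W`; hence `G(Z₃)` is solvable by two
iterations of simultaneous elimination of weakly dominated choices (CRC) but not by
one (IRC). -/
theorem GZ3_crc_solvable_not_irc_solvable :
    BetterOn GZ3.C GZ3.W 0 (0,1) (0,0) ∧
    BetterOn GZ3.C GZ3.W 1 (1,1) (1,2) ∧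
    ndset1 GZ3 0 = {(0,1), (0,2)} ∧
    ndset1 GZ3 1 = {(1,0), (1,1)} ∧
    BetterOn (ndset1 GZ3) GZ3.W 0 (0,1) (0,2) ∧
    BetterOn (ndset1 GZ3) GZ3.W 1 (1,1) (1,0) ∧
    ![((0,1) : Fin 2 × Fin 3), (1,1)] ∈ GZ3.W ∧
    (∀ σ, (∀ i, σ i ∈ ndset2 GZ3 i) → σ ∈ GZ3.W) ∧
    ¬ (∀ σ, (∀ i, σ i ∈ ndset1 GZ3 i) → σ ∈ GZ3.W) := by
  have hwin : ![GZ3.b₁, GZ3.b₂] ∈ GZ3.W := by simp [GZ3.pair_mem_W]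
  have hlose : ![GZ3.c₁, GZ3.a₂] ∉ GZ3.W := by simp +decide [GZ3.pair_mem_W]
  refine ⟨GZ3.betterOn_b₁_a₁, GZ3.betterOn_b₂_c₂, GZ3.ndset1_zero, GZ3.ndset1_one,
    GZ3.betterOn_ndset1_b₁_c₁, GZ3.betterOn_ndset1_b₂_a₂, hwin, ?_, ?_⟩
  · exact fun σ => mem_W_of_ndset2_subset_singleton hwin
      (Fin.forall_fin_two.2 ⟨GZ3.ndset2_zero_subset, GZ3.ndset2_one_subset⟩)
  · intro hirc
    refine hlose (hirc _ (Fin.forall_fin_two.2 ⟨?_, ?_⟩))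
    · simp [GZ3.ndset1_zero]
    · simp [GZ3.ndset1_one]
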